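/- Let X_n and Y_n be sequences of random variables on the same probability space and u_n a sequence of positive numbers. If X_n and Y_n differ by order at least u_n (i.e. there exist c₁, c₂ > 0 with P(|X_n − Y_n| ≥ c₁u_n) ≥ c₂ for all large n) and d_TV(X_n, Y_n) → 0 as n → ∞, then X_n has fluctuations of order at least u_n. -/

import Mathlib

/-!
If `X n` were concentrated on an interval of length much smaller than `u n`, then, being close
in total variation, `Y n` would be concentrated on the same interval, so `X n` and `Y n` would be
close with probability near one, contradicting that they differ by order `u n`. Chatterjee's
inequality makes this quantitative.
-/

open MeasureTheory Filter

/-- Total variation distance between the laws of two real random variables. -/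
noncomputable def dTV {Ω : Type*} [MeasurableSpace Ω] (μ : Measure Ω) (X Y : Ω → ℝ) : ℝ :=
  ⨆ (A : Set ℝ) (_ : MeasurableSet A), |(μ (X ⁻¹' A)).toReal - (μ (Y ⁻¹' A)).toReal|

/-- `X n` has fluctuations of order at least `u n`. -/
def HasFluctuationsAtLeast {Ω : Type*} [MeasurableSpace Ω] (μ : Measure Ω)
    (X : ℕ → Ω → ℝ) (u : ℕ → ℝ) : Prop :=
  ∃ c₁ > (0:ℝ), ∃ c₂ > (0:ℝ), ∃ N : ℕ, ∀ n ≥ N, ∀ a b : ℝ, a ≤ b → b - a ≤ c₁ * u n →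
    (μ {ω | a ≤ X n ω ∧ X n ω ≤ b}).toReal ≤ 1 - c₂

section

variable {Ω : Type*} [MeasurableSpace Ω] {μ : Measure Ω} {X Y : Ω → ℝ}

theorem abs_measureReal_preimage_sub_le_dTV [IsFiniteMeasure μ] {A : Set ℝ}
    (hA : MeasurableSet A) : |μ.real (X ⁻¹' A) - μ.real (Y ⁻¹' A)| ≤ dTV μ X Y := by
  have hbdd : BddAbove (Set.range fun A : Set ℝ =>
      ⨆ _ : MeasurableSet A, |μ.real (X ⁻¹' A) - μ.real (Y ⁻¹' A)|) := by
    refine ⟨μ.real Set.univ, ?_⟩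
    rintro _ ⟨B, rfl⟩
    refine Real.iSup_le (fun _ => ?_) measureReal_nonneg
    exact abs_sub_le_of_nonneg_of_le measureReal_nonneg (measureReal_mono (Set.subset_univ _))
      measureReal_nonneg (measureReal_mono (Set.subset_univ _))
  calc |μ.real (X ⁻¹' A) - μ.real (Y ⁻¹' A)|
      = ⨆ _ : MeasurableSet A, |μ.real (X ⁻¹' A) - μ.real (Y ⁻¹' A)| := by rw [ciSup_pos hA]
    _ ≤ dTV μ X Y := le_ciSup hbdd A

/-- Chatterjee's inequality. -/
theorem two_mul_measureReal_preimage_Icc_le [IsProbabilityMeasure μ] (hY : Measurable Y)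
    (a b : ℝ) :
    2 * μ.real (X ⁻¹' Set.Icc a b) ≤
      1 + μ.real {ω | |X ω - Y ω| ≤ b - a} + dTV μ X Y := by
  set A := X ⁻¹' Set.Icc a b
  set B := Y ⁻¹' Set.Icc a b
  have hclose : A ∩ B ⊆ {ω | |X ω - Y ω| ≤ b - a} := by
    rintro ω ⟨⟨hXa, hXb⟩, hYa, hYb⟩
    change |X ω - Y ω| ≤ b - a
    rw [abs_sub_le_iff]
    constructor <;> linarith
  have hunion_inter : μ.real A + μ.real B = μ.real (A ∪ B) + μ.real (A ∩ B) :=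
    (measureReal_union_add_inter (hY measurableSet_Icc)).symm
  have hdiff : μ.real A - μ.real B ≤ dTV μ X Y :=
    (le_abs_self _).trans (abs_measureReal_preimage_sub_le_dTV measurableSet_Icc)
  linarith [measureReal_le_one (μ := μ) (s := A ∪ B), measureReal_mono (μ := μ) hclose]

theorem measureReal_abs_sub_le_le_one_sub [IsProbabilityMeasure μ] (hX : Measurable X)
    (hY : Measurable Y) {s t c : ℝ} (hst : s < t)
    (hfar : c ≤ μ.real {ω | t ≤ |X ω - Y ω|}) :
    μ.real {ω | |X ω - Y ω| ≤ s} ≤ 1 - c := by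
  have hfar_meas : MeasurableSet {ω | t ≤ |X ω - Y ω|} :=
    measurableSet_le measurable_const (hX.sub hY).abs
  have hsub : {ω | |X ω - Y ω| ≤ s} ⊆ {ω | t ≤ |X ω - Y ω|}ᶜ :=
    fun ω (hclose : |X ω - Y ω| ≤ s) (hfar : t ≤ |X ω - Y ω|) => by linarith
  calc μ.real {ω | |X ω - Y ω| ≤ s} ≤ μ.real {ω | t ≤ |X ω - Y ω|}ᶜ := measureReal_mono hsub
    _ = 1 - μ.real {ω | t ≤ |X ω - Y ω|} := probReal_compl_eq_one_sub hfar_meas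
    _ ≤ 1 - c := by linarith

end

/-- If `X n` and `Y n` differ by order at least `u n` and their total variation distance tends
to zero, then `X n` has fluctuations of order at least `u n`. -/
theorem differ_and_tv_implies_fluctuations {Ω : Type*} [MeasurableSpace Ω] (μ : Measure Ω)
    [IsProbabilityMeasure μ] (X Y : ℕ → Ω → ℝ) (u : ℕ → ℝ) (hu : ∀ n, 0 < u n)
    (hX : ∀ n, Measurable (X n)) (hY : ∀ n, Measurable (Y n))
    (hdiff : ∃ c₁ > (0:ℝ), ∃ c₂ > (0:ℝ), ∃ N : ℕ, ∀ n ≥ N,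
      c₂ ≤ (μ {ω | c₁ * u n ≤ |X n ω - Y n ω|}).toReal)
    (htv : Tendsto (fun n => dTV μ (X n) (Y n)) atTop (nhds 0)) :
    HasFluctuationsAtLeast μ X u := by
  obtain ⟨c₁, hc₁, c₂, hc₂, N, hfar⟩ := hdiff
  obtain ⟨M, hsmall⟩ := eventually_atTop.mp (htv.eventually_lt_const (half_pos hc₂))
  refine ⟨c₁ / 2, half_pos hc₁, c₂ / 4, by positivity, max N M, ?_⟩
  intro n hn a b _ hba
  have hba_lt : b - a < c₁ * u n := hba.trans_lt (mul_lt_mul_of_pos_right (half_lt_self hc₁) (hu n))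
  have hclose := measureReal_abs_sub_le_le_one_sub (hX n) (hY n) hba_lt
    (hfar n (le_of_max_le_left hn))
  have hchatterjee := two_mul_measureReal_preimage_Icc_le (μ := μ) (X := X n) (hY n) a b
  have htv_n := hsmall n (le_of_max_le_right hn)
  change μ.real (X n ⁻¹' Set.Icc a b) ≤ 1 - c₂ / 4
  linarith
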